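/- arXiv:2405.10734 — 5 statements merged into one kernel-verified Lean document; each statement's English description precedes it below -/
import Mathlib

section
/- For all real numbers $0 \le \ell \le L$ and all $r$ with $0 < r \le \pi/(2\sqrt{L})$, one has $0 \le \frac{1}{\tan_\ell^2(r)} - \frac{1}{\tan_L^2(r)} \le \frac{2}{3}(L-\ell)$, where $\tan_\ell(r) := \frac{1}{\sqrt{\ell}}\tan(\sqrt{\ell}\, r)$ for $\ell>0$ and $\tan_0(r):=r$. -/
open Real

noncomputable def tanl (s r : ℝ) : ℝ :=
  if 0 < s then Real.tan (Real.sqrt s * r) / Real.sqrt s else r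

noncomputable def phi (r s : ℝ) : ℝ := s / Real.sin (Real.sqrt s * r) ^ 2 - s

lemma cube_le (u : ℝ) (hu : 0 ≤ u) (hu' : u ≤ π/2) :
    Real.sin u ^ 3 ≤ 3 * (Real.sin u - u * Real.cos u) := by
  set g : ℝ → ℝ := fun x => 3 * (Real.sin x - x * Real.cos x) - Real.sin x ^ 3 with hg
  have hd : ∀ x : ℝ, HasDerivAt g (3 * (Real.cos x - (1 * Real.cos x + x * (-Real.sin x)))
      - 3 * Real.sin x ^ (3-1) * Real.cos x) x := fun x =>
    (((Real.hasDerivAt_sin x).sub ((hasDerivAt_id x).mul (Real.hasDerivAt_cos x))).const_mul 3).sub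
      ((Real.hasDerivAt_sin x).pow 3)
  have hmono : MonotoneOn g (Set.Icc 0 (π/2)) := by
    apply monotoneOn_of_deriv_nonneg (convex_Icc 0 (π/2))
    · fun_prop
    · rw [interior_Icc]
      exact fun x _ => (hd x).differentiableAt.differentiableWithinAt
    · rw [interior_Icc]
      intro x hx
      rw [(hd x).deriv]
      have hs : 0 ≤ Real.sin x := Real.sin_nonneg_of_nonneg_of_le_pi hx.1.le
        (hx.2.le.trans (by linarith [Real.pi_pos]))
      have hsc : Real.sin x * Real.cos x ≤ x := by
        have := Real.sin_le (by linarith [hx.1] : (0:ℝ) ≤ 2*x)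
        rw [Real.sin_two_mul] at this
        linarith
      have h2 : (3:ℕ) - 1 = 2 := rfl
      rw [h2]
      nlinarith [mul_le_mul_of_nonneg_left hsc hs]
  have hmem : (0:ℝ) ∈ Set.Icc 0 (π/2) := ⟨le_refl 0, by positivity⟩
  have h0 : g 0 ≤ g u := hmono hmem ⟨hu, hu'⟩ hu
  simp only [hg, Real.sin_zero, Real.cos_zero] at h0
  norm_num at h0
  linarith

lemma phi_deriv (r s : ℝ) (hr : 0 < r) (hs : 0 < s)
    (hsin : Real.sin (Real.sqrt s * r) ≠ 0) :
    HasDerivAt (phi r)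
      ((Real.sin (Real.sqrt s * r) - (Real.sqrt s * r) * Real.cos (Real.sqrt s * r)) /
        Real.sin (Real.sqrt s * r) ^ 3 - 1) s := by
  set u := Real.sqrt s * r with hu
  have hss : Real.sqrt s * Real.sqrt s = s := Real.mul_self_sqrt hs.le
  have hs0 : Real.sqrt s ≠ 0 := by positivity
  have h1 : HasDerivAt (fun x : ℝ => Real.sqrt x * r) (1/(2*Real.sqrt s)*r) s :=
    (Real.hasDerivAt_sqrt hs.ne').mul_const r
  have h2 : HasDerivAt (fun x : ℝ => Real.sin (Real.sqrt x * r))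
      (Real.cos u * (1/(2*Real.sqrt s)*r)) s := h1.sin
  have h3 : HasDerivAt (fun x : ℝ => Real.sin (Real.sqrt x * r) ^ 2)
      (2 * Real.sin u ^ 1 * (Real.cos u * (1/(2*Real.sqrt s)*r))) s := by
    simpa using h2.fun_pow 2
  have h4 : HasDerivAt (fun x : ℝ => x / Real.sin (Real.sqrt x * r) ^ 2)
      ((1 * Real.sin u ^ 2 - s * (2 * Real.sin u ^ 1 * (Real.cos u * (1/(2*Real.sqrt s)*r)))) /
        (Real.sin u ^ 2) ^ 2) s := (hasDerivAt_id s).div h3 (pow_ne_zero 2 hsin)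
  have h5 := h4.sub (hasDerivAt_id s)
  convert h5 using 1
  · rfl
  · rfl
  · rfl
  rw [hu]
  field_simp
  ring_nf
  rw [Real.sq_sqrt hs.le]
  ring

lemma key (L r : ℝ) (hL : 0 < L) (hr : 0 < r) (hLr : Real.sqrt L * r ≤ π/2)
    (a : ℝ) (ha : 0 < a) (haL : a ≤ L) :
    0 ≤ phi r a - phi r L ∧ phi r a - phi r L ≤ 2/3 * (L - a) := by
  -- basic facts about u = √s * r on [a, L]
  have hubd : ∀ s ∈ Set.Icc a L, 0 < Real.sqrt s * r ∧ Real.sqrt s * r ≤ π/2 := by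
    intro s hs
    have hs0 : 0 < s := lt_of_lt_of_le ha hs.1
    constructor
    · positivity
    · exact le_trans (mul_le_mul_of_nonneg_right (Real.sqrt_le_sqrt hs.2) hr.le) hLr
  have hsinpos : ∀ s ∈ Set.Icc a L, 0 < Real.sin (Real.sqrt s * r) := by
    intro s hs
    obtain ⟨h1, h2⟩ := hubd s hs
    exact Real.sin_pos_of_pos_of_lt_pi h1 (lt_of_le_of_lt h2 (by linarith [Real.pi_pos]))
  rcases eq_or_lt_of_le haL with rfl | haL'
  · constructor <;> simp
  -- continuity
  have hcont : ContinuousOn (phi r) (Set.Icc a L) := by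
    apply ContinuousOn.sub _ continuousOn_id
    apply ContinuousOn.div continuousOn_id
    · fun_prop
    · exact fun s hs => pow_ne_zero 2 (hsinpos s hs).ne'
  -- derivative facts on interior
  have hderiv : ∀ s ∈ Set.Ioo a L, HasDerivAt (phi r)
      ((Real.sin (Real.sqrt s * r) - (Real.sqrt s * r) * Real.cos (Real.sqrt s * r)) /
        Real.sin (Real.sqrt s * r) ^ 3 - 1) s := by
    intro s hs
    exact phi_deriv r s hr (ha.trans hs.1)
      (hsinpos s ⟨hs.1.le, hs.2.le⟩).ne'
  have hdiff : DifferentiableOn ℝ (phi r) (interior (Set.Icc a L)) := by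
    rw [interior_Icc]
    exact fun s hs => (hderiv s hs).differentiableAt.differentiableWithinAt
  have hbound : ∀ s ∈ Set.Ioo a L,
      -(2/3) ≤ deriv (phi r) s ∧ deriv (phi r) s ≤ 0 := by
    intro s hs
    rw [(hderiv s hs).deriv]
    set u := Real.sqrt s * r with hu
    obtain ⟨hu0, hu2⟩ := hubd s ⟨hs.1.le, hs.2.le⟩
    have hsp : 0 < Real.sin u := hsinpos s ⟨hs.1.le, hs.2.le⟩
    have hcn : 0 ≤ Real.cos u := Real.cos_nonneg_of_mem_Icc ⟨by linarith, hu2⟩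
    have hsc : Real.sin u * Real.cos u ≤ u := by
      have := Real.sin_le (by linarith : (0:ℝ) ≤ 2*u)
      rw [Real.sin_two_mul] at this; linarith
    have hsin3 : 0 < Real.sin u ^ 3 := by positivity
    constructor
    · -- sin u ^ 3 ≤ 3 (sin u - u cos u)
      have h := cube_le u hu0.le hu2
      have h2 : (1:ℝ)/3 ≤ (Real.sin u - u * Real.cos u) / Real.sin u ^ 3 := by
        rw [le_div_iff₀ hsin3]; linarith
      linarith
    · -- sin u - u cos u ≤ sin u ^ 3
      have h1 : Real.sin u - u * Real.cos u ≤ Real.sin u ^ 3 := by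
        have hpy := Real.sin_sq_add_cos_sq u
        nlinarith [mul_le_mul_of_nonneg_right hsc hcn]
      have := div_le_one_of_le₀ h1 hsin3.le
      linarith
  have hanti : AntitoneOn (phi r) (Set.Icc a L) := by
    apply antitoneOn_of_deriv_nonpos (convex_Icc a L) hcont hdiff
    rw [interior_Icc]
    exact fun s hs => (hbound s hs).2
  have hmono : MonotoneOn (fun s => phi r s + 2/3 * s) (Set.Icc a L) := by
    apply monotoneOn_of_deriv_nonneg (convex_Icc a L)
    · exact hcont.add (by fun_prop)
    · exact hdiff.add (by fun_prop)
    · rw [interior_Icc]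
      intro s hs
      have h : HasDerivAt (fun s => phi r s + 2/3 * s)
          ((Real.sin (Real.sqrt s * r) - (Real.sqrt s * r) * Real.cos (Real.sqrt s * r)) /
            Real.sin (Real.sqrt s * r) ^ 3 - 1 + 2/3) s :=
        (hderiv s hs).add ((hasDerivAt_id s).const_mul (2/3) |>.congr_deriv (by ring))
      rw [h.deriv]
      have := (hbound s hs).1
      rw [(hderiv s hs).deriv] at this
      linarith
  have hma : a ∈ Set.Icc a L := ⟨le_refl a, haL⟩
  have hmL : L ∈ Set.Icc a L := ⟨haL, le_refl L⟩
  constructor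
  · linarith [hanti hma hmL haL]
  · have := hmono hma hmL haL
    simp only at this
    linarith

lemma phi_eq (r s : ℝ) (hs : 0 < s) (hsin : Real.sin (Real.sqrt s * r) ≠ 0) :
    phi r s = 1 / (tanl s r) ^ 2 := by
  rw [tanl, if_pos hs, phi, Real.tan_eq_sin_div_cos]
  set u := Real.sqrt s * r with hu
  have hss : Real.sqrt s ^ 2 = s := Real.sq_sqrt hs.le
  have hs0 : Real.sqrt s ≠ 0 := by positivity
  by_cases hc : Real.cos u = 0
  · rw [hc]
    have hsin1 : Real.sin u ^ 2 = 1 := by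
      have := Real.sin_sq_add_cos_sq u; rw [hc] at this; nlinarith
    simp [hsin1]
  · have hpy := Real.sin_sq_add_cos_sq u
    field_simp
    nlinarith [hss, sq_nonneg (Real.sin u), sq_nonneg (Real.cos u)]

lemma phi_tendsto (r : ℝ) (hr : 0 < r) :
    Filter.Tendsto (phi r) (nhdsWithin 0 (Set.Ioi 0)) (nhds (1/r^2)) := by
  have h1 : Filter.Tendsto (fun b : ℝ => Real.sin b / b) (nhdsWithin 0 {(0:ℝ)}ᶜ) (nhds 1) := by
    have := Real.hasDerivAt_sin 0
    rw [hasDerivAt_iff_tendsto_slope] at this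
    simp only [Real.cos_zero] at this
    apply this.congr
    intro x
    simp [slope_def_field, div_eq_div_iff]
  have h2 : Filter.Tendsto (fun b : ℝ => b / Real.sin b) (nhdsWithin 0 {(0:ℝ)}ᶜ) (nhds 1) := by
    have := h1.inv₀ one_ne_zero
    simpa [inv_div] using this
  have h3 : Filter.Tendsto (fun a : ℝ => Real.sqrt a * r) (nhdsWithin 0 (Set.Ioi 0))
      (nhdsWithin 0 {(0:ℝ)}ᶜ) := by
    apply tendsto_nhdsWithin_of_tendsto_nhds_of_eventually_within
    · have : Filter.Tendsto (fun a : ℝ => Real.sqrt a * r) (nhds 0) (nhds (Real.sqrt 0 * r)) :=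
        (Real.continuous_sqrt.mul continuous_const).tendsto 0
      simpa using this.mono_left nhdsWithin_le_nhds
    · filter_upwards [self_mem_nhdsWithin] with a (ha : a ∈ Set.Ioi 0)
      have : 0 < Real.sqrt a * r := by
        have := Real.sqrt_pos.mpr (Set.mem_Ioi.mp ha); positivity
      exact fun h => absurd h this.ne'
  have h4 := h2.comp h3
  have h5 : Filter.Tendsto (fun a : ℝ => ((Real.sqrt a * r) / Real.sin (Real.sqrt a * r))^2 / r^2 - a)
      (nhdsWithin 0 (Set.Ioi 0)) (nhds ((1:ℝ)^2/r^2 - 0)) := by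
    apply Filter.Tendsto.sub
    · exact (h4.pow 2).div_const (r^2)
    · exact (continuous_id.tendsto 0).mono_left nhdsWithin_le_nhds
  have h6 : (1:ℝ)^2/r^2 - 0 = 1/r^2 := by ring
  rw [h6] at h5
  apply h5.congr'
  filter_upwards [self_mem_nhdsWithin] with a (ha : a ∈ Set.Ioi 0)
  have ha0 : (0:ℝ) < a := ha
  rw [phi]
  have h7 : (Real.sqrt a * r)^2 = a * r^2 := by
    rw [mul_pow, Real.sq_sqrt ha0.le]
  rw [div_pow, h7, div_div, mul_comm (Real.sin (Real.sqrt a * r) ^ 2) (r^2),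
    ← div_div, mul_div_assoc, div_self (by positivity : (r:ℝ)^2 ≠ 0), mul_one]


theorem stmt0 (ℓ L r : ℝ) (hℓ : 0 ≤ ℓ) (hℓL : ℓ ≤ L) (hL : 0 < L)
    (hr : 0 < r) (hr' : r ≤ Real.pi / (2 * Real.sqrt L)) :
    0 ≤ 1 / (tanl ℓ r) ^ 2 - 1 / (tanl L r) ^ 2 ∧
      1 / (tanl ℓ r) ^ 2 - 1 / (tanl L r) ^ 2 ≤ 2 / 3 * (L - ℓ) := by
  have hL0 : Real.sqrt L ≠ 0 := by positivity
  have hLr : Real.sqrt L * r ≤ π/2 := by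
    have h := mul_le_mul_of_nonneg_left hr' (Real.sqrt_nonneg L)
    have h2 : Real.sqrt L * (π / (2 * Real.sqrt L)) = π/2 := by
      field_simp
    linarith [h2 ▸ h]
  have hsinL : Real.sin (Real.sqrt L * r) ≠ 0 := by
    have h1 : 0 < Real.sqrt L * r := by
      have := Real.sqrt_pos.mpr hL; positivity
    exact (Real.sin_pos_of_pos_of_lt_pi h1
      (lt_of_le_of_lt hLr (by linarith [Real.pi_pos]))).ne'
  have hphiL : phi r L = 1 / (tanl L r) ^ 2 := phi_eq r L hL hsinL
  rcases hℓ.lt_or_eq with hℓ0 | hℓ0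
  · -- ℓ > 0
    have hsinl : Real.sin (Real.sqrt ℓ * r) ≠ 0 := by
      have h1 : 0 < Real.sqrt ℓ * r := by
        have := Real.sqrt_pos.mpr hℓ0; positivity
      have h2 : Real.sqrt ℓ * r ≤ π/2 :=
        le_trans (mul_le_mul_of_nonneg_right (Real.sqrt_le_sqrt hℓL) hr.le) hLr
      exact (Real.sin_pos_of_pos_of_lt_pi h1
        (lt_of_le_of_lt h2 (by linarith [Real.pi_pos]))).ne'
    have hphil : phi r ℓ = 1 / (tanl ℓ r) ^ 2 := phi_eq r ℓ hℓ0 hsinl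
    have := key L r hL hr hLr ℓ hℓ0 hℓL
    rw [hphil, hphiL] at this
    exact this
  · -- ℓ = 0
    subst hℓ0
    have htl : tanl 0 r = r := by rw [tanl, if_neg (lt_irrefl 0)]
    rw [htl]
    have T : Filter.Tendsto (fun a => phi r a - phi r L) (nhdsWithin 0 (Set.Ioi 0))
        (nhds (1/r^2 - phi r L)) := (phi_tendsto r hr).sub_const _
    have hev : ∀ᶠ a in nhdsWithin 0 (Set.Ioi 0),
        0 ≤ phi r a - phi r L ∧ phi r a - phi r L ≤ 2/3 * (L - a) := by
      filter_upwards [Ioo_mem_nhdsGT_of_mem (Set.left_mem_Ico.mpr hL)] with a ha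
      exact key L r hL hr hLr a ha.1 ha.2.le
    constructor
    · rw [← hphiL]
      exact ge_of_tendsto T (hev.mono fun a h => h.1)
    · rw [← hphiL]
      have T2 : Filter.Tendsto (fun a : ℝ => 2/3 * (L - a)) (nhdsWithin 0 (Set.Ioi 0))
          (nhds (2/3 * (L - 0))) :=
        ((continuous_const.mul (continuous_const.sub continuous_id)).tendsto 0).mono_left
          nhdsWithin_le_nhds
      have := le_of_tendsto_of_tendsto T T2 (hev.mono fun a h => h.2)
      simpa using this
end

section
/- The function $f(t) = t/\sin^2(\sqrt{t})$ satisfies $f'(t) \ge 1/3$ for all $t \in (0, \pi^2/4)$; consequently $f(t) - f(s) \ge \frac{1}{3}(t-s)$ for all $0 < s < t < \pi^2/4$. -/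
open Real Set

noncomputable def fSin (t : ℝ) : ℝ := t / (Real.sin (Real.sqrt t)) ^ 2

lemma gDeriv (y : ℝ) :
    HasDerivAt (fun y => 3 * (Real.sin y - y * Real.cos y) - Real.sin y ^ 3)
      (3 * Real.sin y * (y - Real.sin y * Real.cos y)) y := by
  have h : HasDerivAt (fun y => 3 * (Real.sin y - y * Real.cos y) - Real.sin y ^ 3)
      (3 * (Real.cos y - (1 * Real.cos y + y * (-Real.sin y))) -
        3 * Real.sin y ^ 2 * Real.cos y) y := by
    have h1 := ((Real.hasDerivAt_sin y).sub
      ((hasDerivAt_id y).mul (Real.hasDerivAt_cos y))).const_mul 3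
    have h2 := (Real.hasDerivAt_sin y).fun_pow 3
    simpa using h1.fun_sub h2
  convert h using 1; ring

lemma key_s1 {x : ℝ} (hx : 0 ≤ x) (hx2 : x ≤ Real.pi / 2) :
    Real.sin x ^ 3 ≤ 3 * (Real.sin x - x * Real.cos x) := by
  set g := fun y => 3 * (Real.sin y - y * Real.cos y) - Real.sin y ^ 3 with hg
  have hmono : MonotoneOn g (Icc 0 (Real.pi / 2)) := by
    apply monotoneOn_of_hasDerivWithinAt_nonneg (convex_Icc _ _)
      (f' := fun y => 3 * Real.sin y * (y - Real.sin y * Real.cos y))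
    · exact fun y _ => (gDeriv y).continuousAt.continuousWithinAt
    · exact fun y _ => (gDeriv y).hasDerivWithinAt
    · rintro y hy
      rw [interior_Icc] at hy
      have hs : 0 ≤ Real.sin y := Real.sin_nonneg_of_nonneg_of_le_pi hy.1.le
        (hy.2.le.trans (by linarith [Real.pi_pos]))
      have hsl : Real.sin y ≤ y := Real.sin_le hy.1.le
      have hc : Real.cos y ≤ 1 := Real.cos_le_one y
      have h1 : Real.sin y * Real.cos y ≤ Real.sin y := mul_le_of_le_one_right hs hc
      have h2 : 0 ≤ y - Real.sin y * Real.cos y := by linarith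
      have := mul_nonneg hs h2
      nlinarith
  have h0 : g 0 = 0 := by simp [hg]
  have := hmono (left_mem_Icc.2 (by linarith [Real.pi_pos])) ⟨hx, hx2⟩ hx
  rw [h0] at this
  simp only [hg] at this
  linarith

lemma derivIneq {x : ℝ} (hx : 0 < x) (hx2 : x < Real.pi / 2) :
    (1 : ℝ) / 3 ≤ (1 - x / Real.tan x) / Real.sin x ^ 2 := by
  have hs : 0 < Real.sin x := Real.sin_pos_of_pos_of_lt_pi hx (hx2.trans (by linarith [Real.pi_pos]))
  have hc : 0 < Real.cos x := Real.cos_pos_of_mem_Ioo ⟨by linarith, hx2⟩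
  have hk := key_s1 hx.le hx2.le
  rw [Real.tan_eq_sin_div_cos, le_div_iff₀ (by positivity)]
  rw [div_div_eq_mul_div, sub_div' hs.ne']
  rw [le_div_iff₀ hs]
  nlinarith

lemma mainDeriv {t : ℝ} (ht : t ∈ Set.Ioo (0 : ℝ) (Real.pi ^ 2 / 4)) :
    HasDerivAt fSin
      ((1 - Real.sqrt t / Real.tan (Real.sqrt t)) / (Real.sin (Real.sqrt t)) ^ 2) t := by
  obtain ⟨ht0, ht1⟩ := ht
  have hx : 0 < Real.sqrt t := Real.sqrt_pos.2 ht0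
  have hx2 : Real.sqrt t < Real.pi / 2 := by
    rw [Real.sqrt_lt' (by positivity)]; nlinarith
  have hs : 0 < Real.sin (Real.sqrt t) :=
    Real.sin_pos_of_pos_of_lt_pi hx (hx2.trans (by linarith [Real.pi_pos]))
  have hc : 0 < Real.cos (Real.sqrt t) := Real.cos_pos_of_mem_Ioo ⟨by linarith, hx2⟩
  have hsq : HasDerivAt Real.sqrt (1 / (2 * Real.sqrt t)) t := Real.hasDerivAt_sqrt ht0.ne'
  have hsin : HasDerivAt (fun u => Real.sin (Real.sqrt u))
      (Real.cos (Real.sqrt t) * (1 / (2 * Real.sqrt t))) t :=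
    (Real.hasDerivAt_sin _).comp t hsq
  have hsq2 : HasDerivAt (fun u => Real.sin (Real.sqrt u) ^ 2)
      (2 * Real.sin (Real.sqrt t) ^ 1 * (Real.cos (Real.sqrt t) * (1 / (2 * Real.sqrt t)))) t :=
    hsin.pow 2
  have hdiv := (hasDerivAt_id t).div hsq2 (by positivity)
  have heq : (1 * Real.sin (Real.sqrt t) ^ 2 -
        t * (2 * Real.sin (Real.sqrt t) ^ 1 *
          (Real.cos (Real.sqrt t) * (1 / (2 * Real.sqrt t))))) /
        (Real.sin (Real.sqrt t) ^ 2) ^ 2 =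
      (1 - Real.sqrt t / Real.tan (Real.sqrt t)) / Real.sin (Real.sqrt t) ^ 2 := by
    have htt : Real.sqrt t ^ 2 = t := Real.sq_sqrt ht0.le
    rw [Real.tan_eq_sin_div_cos]
    field_simp
    linear_combination Real.cos (Real.sqrt t) * htt
  simp only [id_eq] at hdiv
  rw [heq] at hdiv
  exact hdiv

theorem stmt1 :
    (∀ t ∈ Set.Ioo (0 : ℝ) (Real.pi ^ 2 / 4),
      HasDerivAt fSin
        ((1 - Real.sqrt t / Real.tan (Real.sqrt t)) / (Real.sin (Real.sqrt t)) ^ 2) t ∧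
      (1 : ℝ) / 3 ≤ (1 - Real.sqrt t / Real.tan (Real.sqrt t)) / (Real.sin (Real.sqrt t)) ^ 2) ∧
    (∀ s t : ℝ, 0 < s → s < t → t < Real.pi ^ 2 / 4 →
      fSin t - fSin s ≥ (t - s) / 3) := by
  have hpart1 : ∀ t ∈ Set.Ioo (0 : ℝ) (Real.pi ^ 2 / 4),
      HasDerivAt fSin
        ((1 - Real.sqrt t / Real.tan (Real.sqrt t)) / (Real.sin (Real.sqrt t)) ^ 2) t ∧
      (1 : ℝ) / 3 ≤ (1 - Real.sqrt t / Real.tan (Real.sqrt t)) / (Real.sin (Real.sqrt t)) ^ 2 := by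
    intro t ht
    refine ⟨mainDeriv ht, ?_⟩
    have hx : 0 < Real.sqrt t := Real.sqrt_pos.2 ht.1
    have hx2 : Real.sqrt t < Real.pi / 2 := by
      rw [Real.sqrt_lt' (by positivity)]; nlinarith [ht.2]
    exact derivIneq hx hx2
  refine ⟨hpart1, ?_⟩
  intro s t hs hst ht
  set g := fun u => fSin u - u / 3 with hgdef
  have hsub : Set.Icc s t ⊆ Set.Ioo (0 : ℝ) (Real.pi ^ 2 / 4) := fun y hy =>
    ⟨lt_of_lt_of_le hs hy.1, lt_of_le_of_lt hy.2 ht⟩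
  have hmono : MonotoneOn g (Set.Icc s t) := by
    apply monotoneOn_of_hasDerivWithinAt_nonneg (convex_Icc _ _)
      (f' := fun y => (1 - Real.sqrt y / Real.tan (Real.sqrt y)) / (Real.sin (Real.sqrt y)) ^ 2
        - 1 / 3)
    · intro y hy
      exact (((hpart1 y (hsub hy)).1.sub ((hasDerivAt_id y).div_const 3)).continuousAt).continuousWithinAt
    · intro y hy
      rw [interior_Icc] at hy
      exact ((hpart1 y (hsub (Set.Ioo_subset_Icc_self hy))).1.sub
        ((hasDerivAt_id y).div_const 3)).hasDerivWithinAt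
    · intro y hy
      rw [interior_Icc] at hy
      have := (hpart1 y (hsub (Set.Ioo_subset_Icc_self hy))).2
      linarith
  have := hmono (Set.left_mem_Icc.2 hst.le) (Set.right_mem_Icc.2 hst.le) hst.le
  simp only [hgdef] at this
  linarith
end

section
/- For $n \ge 3$, $\ell > 0$, and the function $\Phi(r) = (\sin(\sqrt{\ell} r)/\sqrt{\ell})^{-(n-2)/2}$ on $(0, \pi/(2\sqrt{\ell}))$, the one-dimensional model Laplacian $\Delta\Phi = \Phi'' + (n-1)\frac{\cos(\sqrt{\ell}r)\sqrt{\ell}}{\sin(\sqrt{\ell}r)}\Phi'$ satisfies $-\frac{\Delta\Phi}{\Phi}(r) = \left(\frac{n-2}{2}\right)^2 \frac{\cos^2(\sqrt{\ell}r)}{\sin^2(\sqrt{\ell}r)}\ell - \frac{n-2}{2}\ell$. -/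
open Real

/-- the explicit radial computation behind the Hardy inequality. -/
theorem stmt6 (n : ℕ) (hn : 3 ≤ n) (ℓ : ℝ) (hℓ : 0 < ℓ)
    (Φ : ℝ → ℝ)
    (hΦ : ∀ r, Φ r = (Real.sin (Real.sqrt ℓ * r) / Real.sqrt ℓ) ^ (-(((n : ℝ) - 2) / 2)))
    (r : ℝ) (hr : r ∈ Set.Ioo 0 (Real.pi / (2 * Real.sqrt ℓ))) :
    -(deriv (deriv Φ) r
        + (n - 1) * (Real.cos (Real.sqrt ℓ * r) * Real.sqrt ℓ / Real.sin (Real.sqrt ℓ * r))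
          * deriv Φ r) / Φ r
      = (((n : ℝ) - 2) / 2) ^ 2
          * (Real.cos (Real.sqrt ℓ * r) ^ 2 / Real.sin (Real.sqrt ℓ * r) ^ 2) * ℓ
        - ((n : ℝ) - 2) / 2 * ℓ := by
  set s := Real.sqrt ℓ with hs_def
  have hs : 0 < s := Real.sqrt_pos.2 hℓ
  have hs2 : s ^ 2 = ℓ := Real.sq_sqrt hℓ.le
  obtain ⟨hr0, hr1⟩ := hr
  set c : ℝ := -(((n : ℝ) - 2) / 2) with hc_def
  have hsinpos : ∀ x ∈ Set.Ioo (0:ℝ) (Real.pi / (2 * s)), 0 < Real.sin (s * x) := by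
    intro x hx
    apply Real.sin_pos_of_pos_of_lt_pi (mul_pos hs hx.1)
    have h1 : s * x < s * (Real.pi / (2 * s)) := mul_lt_mul_of_pos_left hx.2 hs
    have h2 : s * (Real.pi / (2 * s)) = Real.pi / 2 := by field_simp
    linarith [Real.pi_pos]
  have hg : ∀ x : ℝ, HasDerivAt (fun y => Real.sin (s * y) / s) (Real.cos (s * x)) x := by
    intro x
    have h1 : HasDerivAt (fun y : ℝ => s * y) s x := by
      simpa using (hasDerivAt_id x).const_mul s
    have h2 := ((Real.hasDerivAt_sin (s * x)).comp x h1).div_const s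
    convert h2 using 1
    exacts [rfl, rfl, rfl, (mul_div_cancel_right₀ _ hs.ne').symm]
  have hcosd : ∀ x : ℝ, HasDerivAt (fun y => Real.cos (s * y)) (-Real.sin (s * x) * s) x := by
    intro x
    have h1 : HasDerivAt (fun y : ℝ => s * y) s x := by
      simpa using (hasDerivAt_id x).const_mul s
    exact (Real.hasDerivAt_cos (s * x)).comp x h1
  have key : ∀ x ∈ Set.Ioo (0:ℝ) (Real.pi / (2 * s)),
      HasDerivAt Φ (c * (Real.sin (s * x) / s) ^ (c - 1) * Real.cos (s * x)) x := by
    intro x hx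
    have hgx : (0:ℝ) < Real.sin (s * x) / s := div_pos (hsinpos x hx) hs
    have h := (hg x).rpow_const (p := c) (Or.inl hgx.ne')
    have hΦfun : Φ = fun y => (Real.sin (s * y) / s) ^ c := funext hΦ
    rw [hΦfun]
    convert h using 1
    ring
  have hderiv : ∀ x ∈ Set.Ioo (0:ℝ) (Real.pi / (2 * s)),
      deriv Φ x = c * (Real.sin (s * x) / s) ^ (c - 1) * Real.cos (s * x) :=
    fun x hx => (key x hx).deriv
  have hmem : Set.Ioo (0:ℝ) (Real.pi / (2 * s)) ∈ nhds r :=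
    isOpen_Ioo.mem_nhds ⟨hr0, hr1⟩
  have hEq : deriv Φ =ᶠ[nhds r]
      fun x => c * (Real.sin (s * x) / s) ^ (c - 1) * Real.cos (s * x) :=
    Filter.eventuallyEq_of_mem hmem hderiv
  -- second derivative
  have hGpos : (0:ℝ) < Real.sin (s * r) / s := div_pos (hsinpos r ⟨hr0, hr1⟩) hs
  have h1 : HasDerivAt (fun x => (Real.sin (s * x) / s) ^ (c - 1))
      ((c - 1) * (Real.sin (s * r) / s) ^ (c - 1 - 1) * Real.cos (s * r)) r := by
    have h := (hg r).rpow_const (p := c - 1) (Or.inl hGpos.ne')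
    convert h using 1
    ring
  have hF : HasDerivAt
      (fun x => c * (Real.sin (s * x) / s) ^ (c - 1) * Real.cos (s * x))
      ((c * ((c - 1) * (Real.sin (s * r) / s) ^ (c - 1 - 1) * Real.cos (s * r)))
          * Real.cos (s * r)
        + (c * (Real.sin (s * r) / s) ^ (c - 1)) * (-Real.sin (s * r) * s)) r :=
    (h1.const_mul c).mul (hcosd r)
  have hD2 : deriv (deriv Φ) r
      = (c * ((c - 1) * (Real.sin (s * r) / s) ^ (c - 1 - 1) * Real.cos (s * r)))
          * Real.cos (s * r)
        + (c * (Real.sin (s * r) / s) ^ (c - 1)) * (-Real.sin (s * r) * s) := by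
    rw [hEq.deriv_eq]
    exact hF.deriv
  -- rpow identities
  have hG := hGpos
  have e1 : (Real.sin (s * r) / s) ^ (c - 1)
      = (Real.sin (s * r) / s) ^ c / (Real.sin (s * r) / s) := by
    rw [Real.rpow_sub hG, Real.rpow_one]
  have e2 : (Real.sin (s * r) / s) ^ (c - 1 - 1)
      = (Real.sin (s * r) / s) ^ c / (Real.sin (s * r) / s) / (Real.sin (s * r) / s) := by
    rw [Real.rpow_sub hG, Real.rpow_sub hG, Real.rpow_one]
  have hPne : (Real.sin (s * r) / s) ^ c ≠ 0 := (Real.rpow_pos_of_pos hG c).ne'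
  have hSne : Real.sin (s * r) ≠ 0 := (hsinpos r ⟨hr0, hr1⟩).ne'
  rw [hD2, hderiv r ⟨hr0, hr1⟩, hΦ r, e1, e2, ← hs2, hc_def]
  field_simp
  ring
end

section
/- Self-improvement of the pointwise Bakry–Émery bound at the level of symmetric bilinear forms: let $A$ be a symmetric $n\times n$ real matrix (the Hessian $\nabla^2 u$ at a point), $D = \mathrm{tr}(A)$, and $N \ge n$. Then for all vectors $v, w \in \mathbb{R}^n$ with $v, w \ne 0$, $\|A\|_{HS}^2 - \frac{1}{N}D^2 \ge 2\,\frac{\left(v^\top A w - \frac{1}{N} D\, \langle v, w\rangle\right)^2}{|v|^2|w|^2 + \frac{N-2}{N}\langle v,w\rangle^2}$. -/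
/-!
For `N ≥ n` the quadratic form `Q(M) = ‖M‖²_HS - tr(M)²/N` is nonnegative on all `n × n`
matrices, since `tr(M)² ≤ n ∑ M_ii²`. Its polar form `B` therefore satisfies the Cauchy–Schwarz
inequality `B(A, S)² ≤ Q(A) Q(S)`. Taking `S = v wᵀ + w vᵀ` gives `B(A, S) = 2 (vᵀ A w - D⟨v,w⟩/N)`
for symmetric `A` and `Q(S) = 2 (|v|²|w|² + (N-2)/N ⟨v,w⟩²)`.
-/
open Matrix

theorem sq_le_mul_of_forall_quadratic_nonneg {a b c : ℝ}
    (h : ∀ t, 0 ≤ c * (t * t) + 2 * b * t + a) : b ^ 2 ≤ a * c := by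
  have := discrim_le_zero h
  rw [discrim] at this
  linarith

namespace Matrix

variable {ι : Type*} [Fintype ι]

noncomputable def bakryEmeryForm (N : ℝ) (M K : Matrix ι ι ℝ) : ℝ :=
  (Mᵀ * K).trace - 1 / N * M.trace * K.trace

theorem trace_transpose_mul_self_eq_sum_sq (M : Matrix ι ι ℝ) :
    (Mᵀ * M).trace = ∑ i, ∑ j, M i j ^ 2 := by
  rw [Finset.sum_comm]
  simp [trace, mul_apply, sq]

theorem sq_trace_le_card_mul_sum_sq (M : Matrix ι ι ℝ) :
    M.trace ^ 2 ≤ Fintype.card ι * ∑ i, ∑ j, M i j ^ 2 := by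
  calc M.trace ^ 2 ≤ Fintype.card ι * ∑ i, M i i ^ 2 := sq_sum_le_card_mul_sum_sq
    _ ≤ Fintype.card ι * ∑ i, ∑ j, M i j ^ 2 := by
      gcongr with i
      exact Finset.single_le_sum (fun j _ => sq_nonneg (M i j)) (Finset.mem_univ i)

variable {N : ℝ}

theorem bakryEmeryForm_self_nonneg (hN : (Fintype.card ι : ℝ) ≤ N) (M : Matrix ι ι ℝ) :
    0 ≤ bakryEmeryForm N M M := by
  rw [bakryEmeryForm, trace_transpose_mul_self_eq_sum_sq, sub_nonneg, mul_assoc, ← sq,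
    one_div_mul_eq_div]
  have hsq : 0 ≤ ∑ i, ∑ j, M i j ^ 2 := by positivity
  rcases le_or_gt N 0 with hN0 | hN0
  · exact (div_nonpos_of_nonneg_of_nonpos (sq_nonneg _) hN0).trans hsq
  · rw [div_le_iff₀ hN0, mul_comm]
    exact (sq_trace_le_card_mul_sum_sq M).trans (by gcongr)

theorem bakryEmeryForm_comm (M K : Matrix ι ι ℝ) :
    bakryEmeryForm N M K = bakryEmeryForm N K M := by
  rw [bakryEmeryForm, bakryEmeryForm, ← trace_transpose (Mᵀ * K), transpose_mul,
    transpose_transpose]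
  ring

theorem bakryEmeryForm_add_smul_self (M K : Matrix ι ι ℝ) (t : ℝ) :
    bakryEmeryForm N (M + t • K) (M + t • K) =
      bakryEmeryForm N K K * (t * t) + 2 * bakryEmeryForm N M K * t + bakryEmeryForm N M M := by
  have := bakryEmeryForm_comm (N := N) K M
  simp only [bakryEmeryForm] at this ⊢
  simp only [transpose_add, transpose_smul, add_mul, mul_add, Matrix.smul_mul,
    Matrix.mul_smul, trace_add, trace_smul, smul_eq_mul]
  linear_combination t * this

theorem sq_bakryEmeryForm_le (hN : (Fintype.card ι : ℝ) ≤ N) (M K : Matrix ι ι ℝ) :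
    bakryEmeryForm N M K ^ 2 ≤ bakryEmeryForm N M M * bakryEmeryForm N K K :=
  sq_le_mul_of_forall_quadratic_nonneg fun t =>
    bakryEmeryForm_add_smul_self M K t ▸ bakryEmeryForm_self_nonneg hN (M + t • K)

theorem bakryEmeryForm_vecMulVec_add_vecMulVec_self (hN : N ≠ 0) (v w : ι → ℝ) :
    bakryEmeryForm N (vecMulVec v w + vecMulVec w v) (vecMulVec v w + vecMulVec w v) =
      2 * ((v ⬝ᵥ v) * (w ⬝ᵥ w) + (N - 2) / N * (v ⬝ᵥ w) ^ 2) := by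
  simp only [bakryEmeryForm, transpose_add, transpose_vecMulVec, add_mul, mul_add,
    vecMulVec_mul_vecMulVec, trace_add, trace_vecMulVec, dotProduct_smul, smul_eq_mul]
  rw [dotProduct_comm w v]
  field_simp
  ring

theorem IsSymm.bakryEmeryForm_vecMulVec_add_vecMulVec {A : Matrix ι ι ℝ} (hA : A.IsSymm)
    (v w : ι → ℝ) :
    bakryEmeryForm N A (vecMulVec v w + vecMulVec w v) =
      2 * (v ⬝ᵥ A *ᵥ w - 1 / N * A.trace * (v ⬝ᵥ w)) := by
  simp only [bakryEmeryForm, hA.eq, mul_add, mul_vecMulVec, trace_add, trace_vecMulVec]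
  rw [dotProduct_comm w v, dotProduct_comm (A *ᵥ v) w, dotProduct_mulVec, ← mulVec_transpose,
    hA.eq, dotProduct_comm (A *ᵥ w) v]
  ring

end Matrix

theorem stmt7_general (n : ℕ) (hn : 2 ≤ n) (N : ℝ) (hN : (n : ℝ) ≤ N)
    (A : Matrix (Fin n) (Fin n) ℝ) (hA : A.IsSymm)
    (v w : Fin n → ℝ) :
    (∑ i, ∑ j, A i j ^ 2) - (1 / N) * A.trace ^ 2 ≥
      2 * (v ⬝ᵥ A.mulVec w - (1 / N) * A.trace * (v ⬝ᵥ w)) ^ 2 /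
        ((∑ i, v i ^ 2) * (∑ i, w i ^ 2) + (N - 2) / N * (v ⬝ᵥ w) ^ 2) := by
  have hN' : (Fintype.card (Fin n) : ℝ) ≤ N := by simpa using hN
  have hN0 : N ≠ 0 := by
    have : (2 : ℝ) ≤ n := by exact_mod_cast hn
    exact (by linarith : (0 : ℝ) < N).ne'
  have hQA : bakryEmeryForm N A A = (∑ i, ∑ j, A i j ^ 2) - (1 / N) * A.trace ^ 2 := by
    rw [bakryEmeryForm, trace_transpose_mul_self_eq_sum_sq]; ring
  have hsq : ∀ u : Fin n → ℝ, ∑ i, u i ^ 2 = u ⬝ᵥ u := fun u => by simp [dotProduct, sq]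
  have hCS := sq_bakryEmeryForm_le hN' A (vecMulVec v w + vecMulVec w v)
  have hS := bakryEmeryForm_self_nonneg hN' (vecMulVec v w + vecMulVec w v)
  rw [hA.bakryEmeryForm_vecMulVec_add_vecMulVec, bakryEmeryForm_vecMulVec_add_vecMulVec_self hN0]
    at hCS
  rw [bakryEmeryForm_vecMulVec_add_vecMulVec_self hN0] at hS
  rw [ge_iff_le, ← hQA, hsq, hsq]
  apply div_le_of_le_mul₀ (by linarith) (bakryEmeryForm_self_nonneg hN' A)
  linarith

/-- self-improvement of the pointwise Bakry–Émery bound,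
linear-algebraic form. -/
theorem stmt7 (n : ℕ) (hn : 2 ≤ n) (N : ℝ) (hN : (n : ℝ) ≤ N)
    (A : Matrix (Fin n) (Fin n) ℝ) (hA : A.IsSymm)
    (v w : Fin n → ℝ) (hv : v ≠ 0) (hw : w ≠ 0) :
    (∑ i, ∑ j, A i j ^ 2) - (1 / N) * A.trace ^ 2 ≥
      2 * (v ⬝ᵥ A.mulVec w - (1 / N) * A.trace * (v ⬝ᵥ w)) ^ 2 /
        ((∑ i, v i ^ 2) * (∑ i, w i ^ 2) + (N - 2) / N * (v ⬝ᵥ w) ^ 2) :=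
  stmt7_general n hn N hN A hA v w
end

section
/- For a symmetric matrix $A \in \mathbb{R}^{n\times n}$ with trace $D$ and any unit vector $e \in \mathbb{R}^n$ and $N \ge n$: $\|A\|_{HS}^2 - \frac{1}{N}D^2 \ge \frac{N}{N-1}\left|Ae - \frac{D}{N}e\right|^2$. -/
/-!
Write `P = 1 - e eᵀ` for the orthogonal projection onto `e^⊥`, `D = tr A`, `t = ⟨Ae, e⟩` and
`V = |Ae|²`. The compression `PAP` lives on the `(n - 1)`-dimensional space `e^⊥`, so
Cauchy–Schwarz against `P` gives `(tr PAP)² ≤ (n - 1) |PAP|²`, i.e.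
`(D - t)² ≤ (n - 1) (|A|² - 2V + t²)`. Together with `t² ≤ V` this is exactly what is needed:
`(N - 1)` times the difference of the two sides of the claim equals
`(N - 1)(|A|² - 2V + t²) - (D - t)² + (N - 2)(V - t²)`.
-/

open Matrix

namespace Matrix

variable {ι : Type*} [Fintype ι]

lemma trace_mul_transpose_eq_sum {κ : Type*} [Fintype κ] (X Y : Matrix ι κ ℝ) :
    trace (X * Yᵀ) = ∑ i, ∑ j, X i j * Y i j :=
  (sum_hadamard_eq X Y).symm

lemma trace_mul_transpose_sq_le {κ : Type*} [Fintype κ] (X Y : Matrix ι κ ℝ) :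
    trace (X * Yᵀ) ^ 2 ≤ trace (X * Xᵀ) * trace (Y * Yᵀ) := by
  simp only [trace_mul_transpose_eq_sum, ← sq, ← Fintype.sum_prod_type']
  exact Finset.sum_mul_sq_le_sq_mul_sq _ _ _

lemma dotProduct_sq_le (u v : ι → ℝ) : (u ⬝ᵥ v) ^ 2 ≤ (u ⬝ᵥ u) * (v ⬝ᵥ v) := by
  simpa only [dotProduct, sq] using Finset.sum_mul_sq_le_sq_mul_sq Finset.univ u v

lemma sum_sub_mul_sq (v e : ι → ℝ) (c : ℝ) :
    ∑ i, (v i - c * e i) ^ 2 = v ⬝ᵥ v - 2 * c * (e ⬝ᵥ v) + c ^ 2 * (e ⬝ᵥ e) := by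
  simp only [dotProduct, Finset.mul_sum, ← Finset.sum_sub_distrib, ← Finset.sum_add_distrib]
  exact Finset.sum_congr rfl fun i _ => by ring

variable [DecidableEq ι]

omit [Fintype ι] in
lemma isSymm_one_sub_vecMulVec_self (e : ι → ℝ) : (1 - vecMulVec e e).IsSymm := by
  simp [IsSymm, transpose_vecMulVec]

lemma one_sub_vecMulVec_self_mul_self {e : ι → ℝ} (he : e ⬝ᵥ e = 1) :
    (1 - vecMulVec e e) * (1 - vecMulVec e e) = 1 - vecMulVec e e := by
  simp [sub_mul, mul_sub, vecMulVec_mul_vecMulVec, he]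

lemma trace_one_sub_vecMulVec_self {e : ι → ℝ} (he : e ⬝ᵥ e = 1) :
    trace (1 - vecMulVec e e : Matrix ι ι ℝ) = Fintype.card ι - 1 := by
  simp [trace_sub, he]

lemma mul_one_sub_vecMulVec_self (A : Matrix ι ι ℝ) (e : ι → ℝ) :
    A * (1 - vecMulVec e e) = A - vecMulVec (A *ᵥ e) e := by
  simp [mul_sub, mul_vecMulVec]

lemma sq_trace_sub_le_card_sub_one_mul {A : Matrix ι ι ℝ} (hA : A.IsSymm) {e : ι → ℝ}
    (he : e ⬝ᵥ e = 1) :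
    (trace A - e ⬝ᵥ A *ᵥ e) ^ 2 ≤ (Fintype.card ι - 1) *
      (trace (A * A) - 2 * ((A *ᵥ e) ⬝ᵥ (A *ᵥ e)) + (e ⬝ᵥ A *ᵥ e) ^ 2) := by
  set P := 1 - vecMulVec e e
  have hP : Pᵀ = P := isSymm_one_sub_vecMulVec_self e
  have hPP : P * P = P := one_sub_vecMulVec_self_mul_self he
  have hB : (P * A * P)ᵀ = P * A * P := by simp [transpose_mul, hP, hA.eq, Matrix.mul_assoc]
  have hCS := trace_mul_transpose_sq_le P (P * A * P)
  rw [hB, hP, hPP, trace_one_sub_vecMulVec_self he] at hCS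
  have htrace : trace (P * (P * A * P)) = trace A - e ⬝ᵥ A *ᵥ e := by
    rw [← Matrix.mul_assoc, ← Matrix.mul_assoc, hPP, trace_mul_cycle, hPP, trace_mul_comm,
      mul_one_sub_vecMulVec_self]
    simp [trace_sub, dotProduct_comm]
  have hnorm : trace (P * A * P * (P * A * P)) =
      trace (A * A) - 2 * ((A *ᵥ e) ⬝ᵥ (A *ᵥ e)) + (e ⬝ᵥ A *ᵥ e) ^ 2 := by
    have hcollapse : P * A * P * (P * A * P) = P * ((A * P) * (A * P)) := by
      simp only [Matrix.mul_assoc, ← Matrix.mul_assoc P P, hPP]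
    rw [hcollapse, trace_mul_comm, Matrix.mul_assoc (A * P), Matrix.mul_assoc A P P, hPP,
      mul_one_sub_vecMulVec_self]
    have hv : e ᵥ* A = A *ᵥ e := by rw [← vecMul_transpose, hA.eq]
    simp only [sub_mul, mul_sub, trace_sub, mul_vecMulVec, vecMulVec_mul, trace_vecMulVec, hv,
      vecMulVec_mulVec]
    have hAAe : (A *ᵥ (A *ᵥ e)) ⬝ᵥ e = (A *ᵥ e) ⬝ᵥ (A *ᵥ e) := by
      rw [dotProduct_comm, dotProduct_mulVec, hv]
    rw [hAAe, op_smul_eq_smul, smul_dotProduct, smul_eq_mul, dotProduct_comm (A *ᵥ e) e]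
    ring
  rwa [htrace, hnorm] at hCS

end Matrix

lemma div_sub_one_mul_le_of_sq_sub_le {N S D V t : ℝ} (hN : 2 ≤ N) (hVt : t ^ 2 ≤ V)
    (hW : (D - t) ^ 2 ≤ (N - 1) * (S - 2 * V + t ^ 2)) :
    N / (N - 1) * (V - 2 * (D / N) * t + (D / N) ^ 2) ≤ S - 1 / N * D ^ 2 := by
  have hN1 : 0 < N - 1 := by linarith
  have hdiff : S - 1 / N * D ^ 2 - N / (N - 1) * (V - 2 * (D / N) * t + (D / N) ^ 2) =
      ((N - 1) * (S - 2 * V + t ^ 2) - (D - t) ^ 2 + (N - 2) * (V - t ^ 2)) / (N - 1) := by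
    field_simp
    ring
  rw [← sub_nonneg, hdiff]
  apply div_nonneg _ hN1.le
  nlinarith

/-- linear-algebraic version of the self-improved
Bakry–Émery inequality along a unit vector. -/
theorem stmt8 (n : ℕ) (hn : 2 ≤ n) (N : ℝ) (hN : (n : ℝ) ≤ N)
    (A : Matrix (Fin n) (Fin n) ℝ) (hA : A.IsSymm)
    (e : Fin n → ℝ) (he : ∑ i, e i ^ 2 = 1) :
    (∑ i, ∑ j, A i j ^ 2) - (1 / N) * A.trace ^ 2 ≥
      N / (N - 1) * ∑ i, (A.mulVec e i - A.trace / N * e i) ^ 2 := by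
  have hn' : (2 : ℝ) ≤ n := by exact_mod_cast hn
  have he' : e ⬝ᵥ e = 1 := by simpa only [dotProduct, sq] using he
  have hS : ∑ i, ∑ j, A i j ^ 2 = trace (A * A) := by
    simpa only [hA.eq, sq] using (trace_mul_transpose_eq_sum A A).symm
  have hW := sq_trace_sub_le_card_sub_one_mul hA he'
  rw [Fintype.card_fin] at hW
  have hVt := dotProduct_sq_le e (A *ᵥ e)
  rw [he', one_mul] at hVt
  rw [hS, sum_sub_mul_sq, he', mul_one, ge_iff_le]
  refine div_sub_one_mul_le_of_sq_sub_le (by linarith) hVt (hW.trans ?_)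
  have hW0 : 0 ≤ trace (A * A) - 2 * ((A *ᵥ e) ⬝ᵥ (A *ᵥ e)) + (e ⬝ᵥ A *ᵥ e) ^ 2 := by
    nlinarith [sq_nonneg (trace A - e ⬝ᵥ A *ᵥ e)]
  exact mul_le_mul_of_nonneg_right (by linarith) hW0
end
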